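/- Orthogonality of wavelet products at separated scales: let w be a Schwartz function on ℝ with Fourier transform supported in [2/3, 8/3], and w_I the associated wavelets. Let I', I, J', J be dyadic intervals with 8|I'| < |I|, 8|J'| < |J|, and 16|I'| < |J'|. Then the functions w_{I'}·conjugate(w_I) and w_{J'}·conjugate(w_J) are orthogonal in L²(ℝ). -/

import Mathlib

open MeasureTheory SchwartzMap
open scoped FourierTransform

/-- The wavelet `w_I` adapted to the dyadic interval `I = [2^k j, 2^k (j+1))`,
namely `w_I(x) = |I|^{-1/2} w((x - c(I))/|I|)` with `c(I) = 2^k (j + 1/2)`. -/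
noncomputable def wave (w : ℝ → ℂ) (k j : ℤ) : ℝ → ℂ := fun x =>
  ((Real.sqrt ((2 : ℝ) ^ k) : ℝ) : ℂ)⁻¹ *
    w ((x - (2 : ℝ) ^ k * ((j : ℝ) + 1 / 2)) / (2 : ℝ) ^ k)

/-!
By Plancherel, `∫ F · conj G = ∫ 𝓕F · conj 𝓕G`, so it suffices that `𝓕F` and `𝓕G` have
disjoint supports. On the Fourier side a product becomes a convolution, so `𝓕(f · conj g)` is
supported in `supp 𝓕f - supp 𝓕g`. Since `𝓕w_I` lives in `[2/(3|I|), 8/(3|I|)]` and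
`|I| > 8|I'|`, the frequencies of `F = w_{I'} · conj w_I` lie in `(1/(3|I'|), 8/(3|I'|))`;
likewise those of `G` lie in `(1/(3|J'|), 8/(3|J'|))`, and `|J'| > 16|I'|` separates the two.
-/

open Set Function
open scoped ComplexConjugate ComplexInnerProductSpace Pointwise Convolution

theorem Real.fourier_comp_sub_div {E : Type*} [NormedAddCommGroup E] [NormedSpace ℂ E]
    (f : ℝ → E) (m : ℝ) {s : ℝ} (hs : s ≠ 0) (ξ : ℝ) :
    𝓕 (fun x => f ((x - m) / s)) ξ = |s| • 𝐞 (-(m * ξ)) • 𝓕 f (s * ξ) := by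
  set G : ℝ → E := fun v => 𝐞 (-(v * ξ)) • f ((v - m) / s)
  have hsubst : ∫ y, G (s * y + m) = |s⁻¹| • ∫ v, G v := by
    rw [Measure.integral_comp_mul_left (fun z => G (z + m)) s, integral_add_right_eq_self]
  have hG : ∀ y, G (s * y + m) = 𝐞 (-(m * ξ)) • 𝐞 (-(y * (s * ξ))) • f y := by
    intro y
    simp only [G, smul_smul, ← AddChar.map_add_eq_mul]
    congr 2
    · ring
    · field_simp
      ring
  rw [Real.fourier_real_eq, Real.fourier_real_eq,
    ← smul_right_inj (abs_pos.mpr (inv_ne_zero hs)).ne', ← hsubst, smul_smul, ← abs_mul,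
    inv_mul_cancel₀ hs, abs_one, one_smul]
  simp only [hG, Circle.smul_def, integral_smul]

section Schwartz

variable {V F : Type*} [NormedAddCommGroup V] [NormedSpace ℝ V]
  [NormedAddCommGroup F] [NormedSpace ℝ F]

noncomputable def SchwartzMap.compSubDiv (f : 𝓢(ℝ, F)) (m : ℝ) {s : ℝ} (hs : s ≠ 0) :
    𝓢(ℝ, F) :=
  compSubConstCLM ℝ m (compCLMOfContinuousLinearEquiv ℝ
    (ContinuousLinearEquiv.unitsEquivAut ℝ (.mk0 s⁻¹ (inv_ne_zero hs))) f)

@[simp]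
theorem SchwartzMap.compSubDiv_apply (f : 𝓢(ℝ, F)) (m : ℝ) {s : ℝ} (hs : s ≠ 0) (x : ℝ) :
    f.compSubDiv m hs x = f ((x - m) / s) := by
  simp [compSubDiv, compSubConstCLM_apply, div_eq_mul_inv]

noncomputable def SchwartzMap.mulConj (f g : 𝓢(V, ℂ)) : 𝓢(V, ℂ) :=
  pairing (ContinuousLinearMap.mul ℂ ℂ) f
    (postcompCLM (𝕜 := ℝ) Complex.conjCLE.toContinuousLinearMap g)

@[simp]
theorem SchwartzMap.mulConj_apply (f g : 𝓢(V, ℂ)) (x : V) :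
    f.mulConj g x = f x * conj (g x) :=
  rfl

end Schwartz

section FrequencySupport

variable {V : Type*} [NormedAddCommGroup V] [InnerProductSpace ℝ V] [FiniteDimensional ℝ V]
  [MeasurableSpace V] [BorelSpace V]

theorem Real.fourier_conj (f : V → ℂ) (ξ : V) :
    𝓕 (fun x => conj (f x)) ξ = conj (𝓕 f (-ξ)) := by
  simp only [Real.fourier_eq, ← integral_conj, Circle.smul_def, smul_eq_mul, map_mul,
    inner_neg_right, neg_neg, ← Circle.coe_inv_eq_conj, ← AddChar.map_neg_eq_inv]

theorem support_fourier_conj (f : V → ℂ) :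
    support (𝓕 fun x => conj (f x)) = -support (𝓕 f) := by
  ext ξ
  simp [Real.fourier_conj]

theorem support_fourierInv (f : V → ℂ) : support (𝓕⁻ f) = -support (𝓕 f) := by
  ext ξ
  simp [Real.fourierInv_eq_fourier_neg]

theorem support_fourier_mul_subset (f g : 𝓢(V, ℂ)) :
    support (𝓕 fun x => f x * g x) ⊆ support (𝓕 ⇑f) + support (𝓕 ⇑g) := by
  set c : 𝓢(V, ℂ) := SchwartzMap.convolution (ContinuousLinearMap.mul ℂ ℂ) (𝓕⁻ f) (𝓕⁻ g)
  have hc : (fun x => f x * g x) = ⇑(𝓕 c : 𝓢(V, ℂ)) := by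
    ext x
    simp [c, fourier_convolution]
  have hneg : ∀ ξ, 𝓕 ⇑(𝓕 c : 𝓢(V, ℂ)) ξ
      = (⇑(𝓕⁻ f : 𝓢(V, ℂ)) ⋆[ContinuousLinearMap.mul ℂ ℂ] ⇑(𝓕⁻ g : 𝓢(V, ℂ))) (-ξ) := by
    intro ξ
    rw [← convolution_apply, ← neg_neg ξ, ← Real.fourierInv_eq_fourier_neg, neg_neg,
      ← fourierInv_coe, FourierTransform.fourierInv_fourier_eq]
  intro ξ hξ
  rw [hc, mem_support, hneg] at hξ
  have hconv := support_convolution_subset _ hξ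
  rwa [fourierInv_coe, fourierInv_coe, support_fourierInv, support_fourierInv, ← neg_add,
    mem_neg, neg_neg] at hconv

theorem support_fourier_mulConj_subset (f g : 𝓢(V, ℂ)) :
    support (𝓕 ⇑(f.mulConj g)) ⊆ support (𝓕 ⇑f) - support (𝓕 ⇑g) := by
  rw [sub_eq_add_neg, ← support_fourier_conj]
  exact support_fourier_mul_subset f
    (postcompCLM (𝕜 := ℝ) Complex.conjCLE.toContinuousLinearMap g)

theorem integral_mul_conj_eq_zero_of_disjoint (f g : 𝓢(V, ℂ))
    (h : Disjoint (support (𝓕 ⇑f)) (support (𝓕 ⇑g))) : ∫ x, f x * conj (g x) = 0 := by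
  calc ∫ x, f x * conj (g x) = ∫ x, ⟪g x, f x⟫ := by simp
    _ = ∫ ξ, ⟪𝓕 g ξ, 𝓕 f ξ⟫ := (integral_inner_fourier_fourier g f).symm
    _ = 0 := by
      refine integral_eq_zero_of_ae (.of_forall fun ξ => ?_)
      by_cases hξ : ξ ∈ support (𝓕 ⇑f)
      · simp [fourier_coe, notMem_support.mp (h.notMem_of_mem_left hξ)]
      · simp [fourier_coe, notMem_support.mp hξ]

end FrequencySupport

noncomputable def wavelet (w : 𝓢(ℝ, ℂ)) (k j : ℤ) : 𝓢(ℝ, ℂ) :=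
  ((√((2 : ℝ) ^ k) : ℂ)⁻¹) •
    w.compSubDiv ((2 : ℝ) ^ k * ((j : ℝ) + 1 / 2)) (zpow_ne_zero k two_ne_zero)

theorem coe_wavelet (w : 𝓢(ℝ, ℂ)) (k j : ℤ) : ⇑(wavelet w k j) = wave ⇑w k j := by
  ext x
  simp [wavelet, wave]

theorem support_fourier_wavelet_subset (w : 𝓢(ℝ, ℂ)) (k j : ℤ) :
    support (𝓕 ⇑(wavelet w k j)) ⊆ ((2 : ℝ) ^ k * ·) ⁻¹' support (𝓕 ⇑w) := by
  intro ξ hξ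
  contrapose! hξ
  have hcoe : ⇑(w.compSubDiv ((2 : ℝ) ^ k * ((j : ℝ) + 1 / 2)) (zpow_ne_zero k two_ne_zero)) =
      fun x => w ((x - (2 : ℝ) ^ k * ((j : ℝ) + 1 / 2)) / (2 : ℝ) ^ k) :=
    funext (compSubDiv_apply _ _ _)
  rw [notMem_support, ← fourier_coe, wavelet, FourierTransform.fourier_smul, smul_apply,
    fourier_coe, hcoe, Real.fourier_comp_sub_div _ _ (zpow_ne_zero k two_ne_zero),
    notMem_support.mp hξ, smul_zero, smul_zero, smul_zero]

theorem support_fourier_wavelet_mulConj_subset (w : 𝓢(ℝ, ℂ))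
    (hw : support (𝓕 ⇑w) ⊆ Icc (2 / 3) (8 / 3)) {k' k : ℤ} (j' j : ℤ)
    (hk : 8 * (2 : ℝ) ^ k' < (2 : ℝ) ^ k) :
    support (𝓕 ⇑((wavelet w k' j').mulConj (wavelet w k j))) ⊆
      ((2 : ℝ) ^ k' * ·) ⁻¹' Ioo (1 / 3) (8 / 3) := by
  intro ξ hξ
  obtain ⟨a, ha, b, hb, rfl⟩ := support_fourier_mulConj_subset _ _ hξ
  obtain ⟨ha₁, ha₂⟩ := hw (support_fourier_wavelet_subset w k' j' ha)
  obtain ⟨hb₁, hb₂⟩ := hw (support_fourier_wavelet_subset w k j hb)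
  have hk' : 0 < (2 : ℝ) ^ k' := by positivity
  have hb : 0 < b := pos_of_mul_pos_right (a := (2 : ℝ) ^ k) (by linarith) (by linarith)
  have hb' : (2 : ℝ) ^ k' * b < 1 / 3 := by nlinarith
  constructor <;> nlinarith

theorem disjoint_preimage_mul_Ioo {s t : ℝ} (hs : 0 < s) (h : 8 * s ≤ t) :
    Disjoint ((s * ·) ⁻¹' Ioo (1 / 3) (8 / 3)) ((t * ·) ⁻¹' Ioo (1 / 3) (8 / 3)) := by
  rw [Set.disjoint_left]
  rintro ξ ⟨hsξ, -⟩ ⟨-, htξ⟩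
  have hξ : 0 < ξ := pos_of_mul_pos_right (by linarith) hs.le
  nlinarith

theorem hankel_stmt19 (w : 𝓢(ℝ, ℂ))
    (hsupp : ∀ ξ : ℝ, ξ ∉ Set.Icc (2 / 3 : ℝ) (8 / 3) → 𝓕 ⇑w ξ = 0)
    (kI jI kI' jI' kJ jJ kJ' jJ' : ℤ)
    (hI : 8 * (2 : ℝ) ^ kI' < (2 : ℝ) ^ kI)
    (hJ : 8 * (2 : ℝ) ^ kJ' < (2 : ℝ) ^ kJ)
    (hIJ : 16 * (2 : ℝ) ^ kI' < (2 : ℝ) ^ kJ') :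
    ∫ x : ℝ, (wave (⇑w) kI' jI' x * (starRingEnd ℂ) (wave (⇑w) kI jI x)) *
        (starRingEnd ℂ) (wave (⇑w) kJ' jJ' x * (starRingEnd ℂ) (wave (⇑w) kJ jJ x)) = 0 := by
  have hw : support (𝓕 ⇑w) ⊆ Icc (2 / 3) (8 / 3) := support_subset_iff'.mpr hsupp
  have hkI' : 0 < (2 : ℝ) ^ kI' := by positivity
  simp only [← coe_wavelet]
  exact integral_mul_conj_eq_zero_of_disjoint _ _
    ((disjoint_preimage_mul_Ioo hkI' (by linarith)).mono
      (support_fourier_wavelet_mulConj_subset w hw jI' jI hI)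
      (support_fourier_wavelet_mulConj_subset w hw jJ' jJ hJ))
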